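/- Lower bound on target error under identical marginals: suppose the source and target distributions have the same marginal feature distribution p(x), the loss is L(h(x),y) = |h(x) − y|, and the source error of hypothesis h is zero, i.e., ε_S(h) = 0. Then the target error satisfies ε_T(h) ≥ |P_T[y=1] − P_S[y=1]|. -/

import Mathlib

open MeasureTheory
open scoped symmDiff

/-! Zero source error means `h` agrees with the label `PS`-a.e., so the events `{h x = 1}` and
`{y = 1}` have the same `PS`-probability; by equality of marginals the first also has the same
`PT`-probability. The target error is the `PT`-measure of the symmetric difference of the two
events, which dominates the difference of their probabilities. -/

lemma abs_ite_sub_ite_eq_indicator_symmDiff {α : Type*} (f g : α → Bool) (a : α) :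
    |(if f a then (1:ℝ) else 0) - (if g a then (1:ℝ) else 0)| =
      ((f ⁻¹' {true}) ∆ (g ⁻¹' {true})).indicator 1 a := by
  cases hf : f a <;> cases hg : g a <;> simp [Set.mem_symmDiff, hf, hg]

lemma integral_abs_ite_sub_ite {α : Type*} [MeasurableSpace α] (μ : Measure α)
    {f g : α → Bool} (hf : Measurable f) (hg : Measurable g) :
    ∫ a, |(if f a then (1:ℝ) else 0) - (if g a then (1:ℝ) else 0)| ∂μ =
      μ.real ((f ⁻¹' {true}) ∆ (g ⁻¹' {true})) := by
  simp_rw [abs_ite_sub_ite_eq_indicator_symmDiff f g]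
  exact integral_indicator_one
    ((hf (measurableSet_singleton true)).symmDiff (hg (measurableSet_singleton true)))

lemma measure_preimage_eq_of_map_eq {α β : Type*} [MeasurableSpace α] [MeasurableSpace β]
    {μ ν : Measure α} {f : α → β} (hf : Measurable f) (hμν : μ.map f = ν.map f)
    {s : Set β} (hs : MeasurableSet s) : μ (f ⁻¹' s) = ν (f ⁻¹' s) := by
  rw [← Measure.map_apply hf hs, hμν, Measure.map_apply hf hs]

/-- If the source and target distributions on `X × Bool` have the same feature marginal and
the source error of `h` under the absolute loss is zero, then the target error is at least
the difference of the marginal label probabilities. -/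
theorem target_error_lower_bound {X : Type*} [MeasurableSpace X]
    (PS PT : Measure (X × Bool)) [IsProbabilityMeasure PS] [IsProbabilityMeasure PT]
    (hmarg : PS.map Prod.fst = PT.map Prod.fst)
    (h : X → Bool) (hmeas : Measurable h)
    (hS : ∫ p : X × Bool, |(if h p.1 then (1:ℝ) else 0) - (if p.2 then (1:ℝ) else 0)| ∂PS = 0) :
    ∫ p : X × Bool, |(if h p.1 then (1:ℝ) else 0) - (if p.2 then (1:ℝ) else 0)| ∂PT ≥
      |(PT (Set.univ ×ˢ {true})).toReal - (PS (Set.univ ×ˢ {true})).toReal| := by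
  set B : Set (X × Bool) := (fun p => h p.1) ⁻¹' {true}
  set A : Set (X × Bool) := Prod.snd ⁻¹' {true}
  have hB : MeasurableSet B := hmeas.comp measurable_fst (measurableSet_singleton true)
  have hA : MeasurableSet A := measurable_snd (measurableSet_singleton true)
  have hloss (μ : Measure (X × Bool)) :
      ∫ p, |(if h p.1 then (1:ℝ) else 0) - (if p.2 then (1:ℝ) else 0)| ∂μ = μ.real (B ∆ A) :=
    integral_abs_ite_sub_ite μ (hmeas.comp measurable_fst) measurable_snd
  have hPS : PS.real A = PS.real B := by
    rw [hloss, measureReal_eq_zero_iff, measure_symmDiff_eq_zero_iff] at hS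
    exact measureReal_congr hS.symm
  have hPSPT : PS.real B = PT.real B :=
    congrArg ENNReal.toReal
      (measure_preimage_eq_of_map_eq measurable_fst hmarg (hmeas (measurableSet_singleton true)))
  rw [ge_iff_le, hloss, symmDiff_comm, Set.univ_prod, ← measureReal_def, ← measureReal_def]
  calc |PT.real A - PS.real A| = |PT.real A - PT.real B| := by rw [hPS, hPSPT]
    _ ≤ PT.real (A ∆ B) :=
      abs_measureReal_sub_le_measureReal_symmDiff hA.nullMeasurableSet hB.nullMeasurableSet
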